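/- Let p > 0 with 2/p ∈ ℕ, ω ≥ 0, γ ∈ (0,1), φ ∈ [0,2π), and r > 0. Applying the Erdélyi–Kober fractional integral I^γ_{0+;p,η} with η = (1−1/p)ω + 2/p − 1 to 𝒥_{ω,φ}^{[p]} gives (I^γ_{0+;p,(1−1/p)ω+2/p−1})𝒥_{ω,φ}^{[p]}(r) = (p/r)^γ · 𝒥_{ω+γ,φ}^{[p]}(r). -/

import Mathlib

/-- The one-variable generalized Bessel function `𝒥_{ω,φ}^{[p]}(r)`, via its series. -/
noncomputable def calJ (p ω φ r : ℝ) : ℝ :=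
  ((2 / p) ^ 2 / Real.Gamma (1 / p) ^ 2) *
    ∑' k : ℕ, (p ^ (2 * k) * (-1 : ℝ) ^ k / Real.Gamma ((2 / p) * ((k : ℝ) + 1) + ω)) *
      (r / p) ^ (2 * (k : ℝ) + ω) *
      ∑ n ∈ Finset.range (k + 1),
        Real.Gamma ((2 * (n : ℝ) + 1) / p) * Real.Gamma ((2 * ((k - n : ℕ) : ℝ) + 1) / p) /
            ((Nat.factorial (2 * n) : ℝ) * (Nat.factorial (2 * (k - n)) : ℝ)) *
          (|Real.cos φ| ^ (4 * (n : ℝ) / p) * |Real.sin φ| ^ (4 * ((k - n : ℕ) : ℝ) / p))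

/-- The Erdélyi–Kober type fractional integral with base point `0`. -/
noncomputable def EKintegral (p η α : ℝ) (f : ℝ → ℝ) (r : ℝ) : ℝ :=
  (p / Real.Gamma α) *
    ∫ τ in (0 : ℝ)..1, τ ^ (p * (η + 1) - 1) * (1 - τ ^ p) ^ (α - 1) * f (τ * r)

/-!
Every term of the series defining `𝒥_{ω,φ}^{[p]}(r)` is a constant multiple of `(r/p)^(2k+ω)`,
hence homogeneous of degree `2k+ω` in `r`. After the substitution `u = τ^p`, the Erdélyi–Kober
integral of such a term is a Beta integral, so it multiplies the term by
`Γ(s_k) / Γ(s_k + γ)` with `s_k = 2(k+1)/p + ω`; this turns `1 / Γ(s_k)` into `1 / Γ(s_k + γ)`,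
i.e. `ω` into `ω + γ`, at the cost of the factor `(p/r)^γ`.

Integrating term by term is legitimate because `B(a, b)` is antitone in both arguments: this gives
`Γ(a) Γ(b) ≤ B(1/p, 1/p) Γ(a + b)` for `a, b ≥ 1/p` and bounds `Γ(x) / Γ(x + ω)` uniformly, so the
series of absolute values is dominated by the Cauchy square of the `cosh r` series.
-/

open MeasureTheory Set Real
open ProbabilityTheory (beta beta_pos beta_eq_betaIntegralReal)

section Beta

variable {a b a₀ b₀ : ℝ}

lemma betaKernel_ofReal {x : ℝ} (hx₀ : 0 ≤ x) (hx₁ : x ≤ 1) :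
    (x : ℂ) ^ ((a : ℂ) - 1) * (1 - (x : ℂ)) ^ ((b : ℂ) - 1)
      = ((x ^ (a - 1) * (1 - x) ^ (b - 1) : ℝ) : ℂ) := by
  rw [Complex.ofReal_mul, Complex.ofReal_cpow hx₀, Complex.ofReal_cpow (by linarith)]
  push_cast
  ring_nf

lemma integrableOn_betaKernel (ha : 0 < a) (hb : 0 < b) :
    IntegrableOn (fun t : ℝ => t ^ (a - 1) * (1 - t) ^ (b - 1)) (Ioo 0 1) := by
  have hc := Complex.betaIntegral_convergent (u := a) (v := b) (by simpa) (by simpa)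
  rw [intervalIntegrable_iff_integrableOn_Ioo_of_le zero_le_one] at hc
  refine IntegrableOn.congr_fun (f := fun t : ℝ => RCLike.re _) hc.re (fun t ht => ?_)
    measurableSet_Ioo
  simp [betaKernel_ofReal (a := a) (b := b) ht.1.le ht.2.le]

lemma integral_betaKernel (ha : 0 < a) (hb : 0 < b) :
    ∫ t in Ioo (0 : ℝ) 1, t ^ (a - 1) * (1 - t) ^ (b - 1) = beta a b := by
  have hbeta : Complex.betaIntegral a b
      = ((∫ t in (0 : ℝ)..1, t ^ (a - 1) * (1 - t) ^ (b - 1) : ℝ) : ℂ) := by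
    rw [Complex.betaIntegral, ← intervalIntegral.integral_ofReal]
    refine intervalIntegral.integral_congr fun t ht => ?_
    rw [uIcc_of_le zero_le_one] at ht
    exact betaKernel_ofReal ht.1 ht.2
  rw [beta_eq_betaIntegralReal a b ha hb, hbeta, Complex.ofReal_re,
    intervalIntegral.integral_of_le zero_le_one, integral_Ioc_eq_integral_Ioo]

/-- The kernel `t ^ (a - 1) * (1 - t) ^ (b - 1)` decreases in `a` and `b` on `(0, 1)`. -/
lemma beta_le_beta (ha₀ : 0 < a₀) (hb₀ : 0 < b₀) (ha : a₀ ≤ a) (hb : b₀ ≤ b) :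
    beta a b ≤ beta a₀ b₀ := by
  rw [← integral_betaKernel (ha₀.trans_le ha) (hb₀.trans_le hb), ← integral_betaKernel ha₀ hb₀]
  refine setIntegral_mono_on (integrableOn_betaKernel (ha₀.trans_le ha) (hb₀.trans_le hb))
    (integrableOn_betaKernel ha₀ hb₀) measurableSet_Ioo fun t ⟨ht₀, ht₁⟩ => ?_
  gcongr ?_ * ?_
  · exact rpow_le_rpow_of_exponent_ge ht₀ ht₁.le (by linarith)
  · exact rpow_le_rpow_of_exponent_ge (by linarith) (by linarith) (by linarith)

end Beta

section GammaBounds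

variable {a b a₀ b₀ x x₀ c : ℝ}

lemma Gamma_mul_Gamma_le (ha₀ : 0 < a₀) (hb₀ : 0 < b₀) (ha : a₀ ≤ a) (hb : b₀ ≤ b) :
    Gamma a * Gamma b ≤ beta a₀ b₀ * Gamma (a + b) := by
  have h := beta_le_beta ha₀ hb₀ ha hb
  rwa [beta, div_le_iff₀ (Gamma_pos_of_pos (by linarith))] at h

lemma Gamma_div_Gamma_add_le (hx₀ : 0 < x₀) (hx : x₀ ≤ x) (hc : 0 < c) :
    Gamma x / Gamma (x + c) ≤ Gamma x₀ / Gamma (x₀ + c) := by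
  have h := beta_le_beta hx₀ hc hx le_rfl
  rw [beta, beta, mul_div_right_comm, mul_div_right_comm (Gamma x₀)] at h
  exact le_of_mul_le_mul_right h (Gamma_pos_of_pos hc)

end GammaBounds

section Substitution

variable {p : ℝ}

lemma image_rpow_Ioo_zero_one (hp : 0 < p) : (· ^ p) '' Ioo (0 : ℝ) 1 = Ioo 0 1 := by
  ext u
  constructor
  · rintro ⟨τ, ⟨hτ₀, hτ₁⟩, rfl⟩
    exact ⟨rpow_pos_of_pos hτ₀ p, rpow_lt_one hτ₀.le hτ₁ hp⟩
  · rintro ⟨hu₀, hu₁⟩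
    refine ⟨u ^ p⁻¹, ⟨rpow_pos_of_pos hu₀ _, rpow_lt_one hu₀.le hu₁ (inv_pos.2 hp)⟩, ?_⟩
    simp [← rpow_mul hu₀.le, hp.ne']

lemma hasDerivWithinAt_rpow_Ioo {τ : ℝ} (hτ : τ ∈ Ioo (0 : ℝ) 1) :
    HasDerivWithinAt (· ^ p) (p * τ ^ (p - 1)) (Ioo 0 1) τ :=
  (hasDerivAt_rpow_const (Or.inl hτ.1.ne')).hasDerivWithinAt

lemma injOn_rpow_Ioo (hp : 0 < p) : InjOn (· ^ p) (Ioo (0 : ℝ) 1) :=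
  (rpow_left_injOn hp.ne').mono fun _ hτ => hτ.1.le

lemma abs_deriv_rpow_smul (hp : 0 < p) (g : ℝ → ℝ) {τ : ℝ} (hτ : τ ∈ Ioo (0 : ℝ) 1) :
    |p * τ ^ (p - 1)| • g (τ ^ p) = p * τ ^ (p - 1) * g (τ ^ p) := by
  rw [smul_eq_mul, abs_of_pos (mul_pos hp (rpow_pos_of_pos hτ.1 _))]

lemma integral_comp_rpow_Ioo (hp : 0 < p) (g : ℝ → ℝ) :
    ∫ τ in Ioo (0 : ℝ) 1, p * τ ^ (p - 1) * g (τ ^ p) = ∫ u in Ioo (0 : ℝ) 1, g u := by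
  have h := integral_image_eq_integral_abs_deriv_smul measurableSet_Ioo
    (fun _ => hasDerivWithinAt_rpow_Ioo) (injOn_rpow_Ioo hp) g
  rw [image_rpow_Ioo_zero_one hp] at h
  rw [h]
  exact setIntegral_congr_fun measurableSet_Ioo fun _ hτ => (abs_deriv_rpow_smul hp g hτ).symm

lemma integrableOn_comp_rpow_Ioo_iff (hp : 0 < p) (g : ℝ → ℝ) :
    IntegrableOn (fun τ => p * τ ^ (p - 1) * g (τ ^ p)) (Ioo 0 1) ↔ IntegrableOn g (Ioo 0 1) := by
  have h := integrableOn_image_iff_integrableOn_abs_deriv_smul measurableSet_Ioo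
    (fun _ => hasDerivWithinAt_rpow_Ioo) (injOn_rpow_Ioo hp) g
  rw [image_rpow_Ioo_zero_one hp] at h
  rw [h]
  exact integrableOn_congr_fun (fun _ hτ => (abs_deriv_rpow_smul hp g hτ).symm) measurableSet_Ioo

end Substitution

noncomputable def EKkernel (p s α τ : ℝ) : ℝ := τ ^ (p * s - 1) * (1 - τ ^ p) ^ (α - 1)

section EKkernel

variable {p s α τ : ℝ}

lemma EKkernel_nonneg (hτ : τ ∈ Ioo (0 : ℝ) 1) (hp : 0 < p) : 0 ≤ EKkernel p s α τ :=
  mul_nonneg (rpow_nonneg hτ.1.le _)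
    (rpow_nonneg (sub_nonneg.2 (rpow_le_one hτ.1.le hτ.2.le hp.le)) _)

lemma EKkernel_mul_rpow (hp : p ≠ 0) (hτ : 0 < τ) (d : ℝ) :
    EKkernel p s α τ * τ ^ d = EKkernel p (s + d / p) α τ := by
  rw [EKkernel, EKkernel, mul_right_comm, ← rpow_add hτ]
  congr 2
  field_simp
  ring

lemma EKkernel_eq_comp_rpow (hp : 0 < p) (hτ : τ ∈ Ioo (0 : ℝ) 1) :
    EKkernel p s α τ = p⁻¹ * (p * τ ^ (p - 1) * ((τ ^ p) ^ (s - 1) * (1 - τ ^ p) ^ (α - 1))) := by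
  rw [EKkernel, ← rpow_mul hτ.1.le, ← mul_assoc, ← mul_assoc, inv_mul_cancel_left₀ hp.ne',
    ← rpow_add hτ.1]
  ring_nf

lemma integrableOn_EKkernel (hp : 0 < p) (hs : 0 < s) (hα : 0 < α) :
    IntegrableOn (EKkernel p s α) (Ioo 0 1) :=
  IntegrableOn.congr_fun
    (((integrableOn_comp_rpow_Ioo_iff hp _).2 (integrableOn_betaKernel hs hα)).const_mul p⁻¹)
    (fun _ hτ => (EKkernel_eq_comp_rpow hp hτ).symm) measurableSet_Ioo

lemma integral_EKkernel (hp : 0 < p) (hs : 0 < s) (hα : 0 < α) :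
    ∫ τ in Ioo (0 : ℝ) 1, EKkernel p s α τ = beta s α / p := by
  rw [setIntegral_congr_fun measurableSet_Ioo fun _ hτ => EKkernel_eq_comp_rpow hp hτ,
    integral_const_mul,
    integral_comp_rpow_Ioo hp fun t => t ^ (s - 1) * (1 - t) ^ (α - 1), integral_betaKernel hs hα,
    inv_mul_eq_div]

end EKkernel

section EKintegral

variable {p η α r : ℝ}

lemma EKintegral_eq_setIntegral (p η α : ℝ) (f : ℝ → ℝ) (r : ℝ) :
    EKintegral p η α f r
      = p / Gamma α * ∫ τ in Ioo (0 : ℝ) 1, EKkernel p (η + 1) α τ * f (τ * r) := by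
  rw [EKintegral, intervalIntegral.integral_of_le zero_le_one, integral_Ioc_eq_integral_Ioo]
  rfl

lemma EKintegral_tsum_of_homogeneous {f : ℕ → ℝ → ℝ} {d s : ℕ → ℝ} (hp : 0 < p) (hα : 0 < α)
    (hf : ∀ k, ∀ τ ∈ Ioo (0 : ℝ) 1, f k (τ * r) = τ ^ d k * f k r)
    (hds : ∀ k, η + 1 + d k / p = s k) (hs : ∀ k, 0 < s k)
    (hsum : Summable fun k => |f k r| * beta (s k) α) :
    EKintegral p η α (fun x => ∑' k, f k x) r
      = ∑' k, Gamma (s k) / Gamma (s k + α) * f k r := by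
  have hexpand : ∀ τ ∈ Ioo (0 : ℝ) 1, EKkernel p (η + 1) α τ * ∑' k, f k (τ * r)
      = ∑' k, f k r * EKkernel p (s k) α τ := fun τ hτ => by
    rw [← tsum_mul_left]
    refine tsum_congr fun k => ?_
    rw [hf k τ hτ, ← hds, ← EKkernel_mul_rpow hp.ne' hτ.1]
    ring
  have hint : ∀ k, IntegrableOn (fun τ => f k r * EKkernel p (s k) α τ) (Ioo 0 1) := fun k =>
    (integrableOn_EKkernel hp (hs k) hα).const_mul _
  have hnorm : ∀ k, ∫ τ in Ioo (0 : ℝ) 1, ‖f k r * EKkernel p (s k) α τ‖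
      = |f k r| * beta (s k) α / p := fun k => by
    rw [setIntegral_congr_fun measurableSet_Ioo fun τ hτ => by
      rw [norm_mul, norm_of_nonneg (EKkernel_nonneg hτ hp), norm_eq_abs], integral_const_mul,
      integral_EKkernel hp (hs k) hα, mul_div_assoc]
  have hsum' : Summable fun k => ∫ τ in Ioo (0 : ℝ) 1, ‖f k r * EKkernel p (s k) α τ‖ := by
    simpa only [hnorm] using hsum.div_const p
  rw [EKintegral_eq_setIntegral, setIntegral_congr_fun measurableSet_Ioo hexpand,
    ← integral_tsum_of_summable_integral_norm hint hsum', ← tsum_mul_left]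
  refine tsum_congr fun k => ?_
  have hΓ := (Gamma_pos_of_pos hα).ne'
  have hΓs := (Gamma_pos_of_pos (add_pos (hs k) hα)).ne'
  rw [integral_const_mul, integral_EKkernel hp (hs k) hα, beta]
  field_simp

end EKintegral

section calJSeries

variable {p ω φ r : ℝ}

noncomputable def angularSum (p φ : ℝ) (k : ℕ) : ℝ :=
  ∑ n ∈ Finset.range (k + 1),
    Gamma ((2 * (n : ℝ) + 1) / p) * Gamma ((2 * ((k - n : ℕ) : ℝ) + 1) / p) /
        (((2 * n).factorial : ℝ) * ((2 * (k - n)).factorial : ℝ)) *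
      (|cos φ| ^ (4 * (n : ℝ) / p) * |sin φ| ^ (4 * ((k - n : ℕ) : ℝ) / p))

noncomputable def calJTerm (p ω φ : ℝ) (k : ℕ) (r : ℝ) : ℝ :=
  (2 / p) ^ 2 / Gamma (1 / p) ^ 2 *
    (p ^ (2 * k) * (-1 : ℝ) ^ k / Gamma ((2 / p) * ((k : ℝ) + 1) + ω) *
      (r / p) ^ (2 * (k : ℝ) + ω) * angularSum p φ k)

lemma calJ_eq_tsum (p ω φ r : ℝ) : calJ p ω φ r = ∑' k, calJTerm p ω φ k r := by
  rw [calJ, ← tsum_mul_left]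
  rfl

lemma calJTerm_homogeneous (hp : 0 < p) (hr : 0 ≤ r) (φ : ℝ) (k : ℕ) {τ : ℝ} (hτ : 0 ≤ τ) :
    calJTerm p ω φ k (τ * r) = τ ^ (2 * (k : ℝ) + ω) * calJTerm p ω φ k r := by
  rw [calJTerm, calJTerm, mul_div_assoc τ r p, mul_rpow hτ (div_nonneg hr hp.le)]
  ring

lemma Gamma_div_mul_calJTerm (hp : 0 < p) (hω : 0 ≤ ω) (hr : 0 < r) (γ φ : ℝ) (k : ℕ) :
    Gamma (2 / p * (k + 1) + ω) / Gamma (2 / p * (k + 1) + ω + γ) * calJTerm p ω φ k r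
      = (p / r) ^ γ * calJTerm p (ω + γ) φ k r := by
  have hΓ := (Gamma_pos_of_pos (by positivity : 0 < 2 / p * (k + 1) + ω)).ne'
  have hrp : 0 < r / p := div_pos hr hp
  have hpr : (p / r) ^ γ = ((r / p) ^ γ)⁻¹ := by rw [← inv_rpow hrp.le, inv_div]
  rw [calJTerm, calJTerm, ← add_assoc, ← add_assoc, rpow_add hrp _ γ, hpr]
  field_simp

end calJSeries

section calJSummable

open Finset

variable {p ω φ r : ℝ}

lemma angularSum_nonneg (hp : 0 < p) (φ : ℝ) (k : ℕ) : 0 ≤ angularSum p φ k :=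
  sum_nonneg fun n _ => by
    have := Gamma_pos_of_pos (by positivity : 0 < (2 * (n : ℝ) + 1) / p)
    have := Gamma_pos_of_pos (by positivity : 0 < (2 * ((k - n : ℕ) : ℝ) + 1) / p)
    positivity

lemma angularSum_le (hp : 0 < p) (φ : ℝ) (k : ℕ) :
    angularSum p φ k ≤ beta (1 / p) (1 / p) * Gamma (2 / p * (k + 1)) *
      ∑ n ∈ range (k + 1), ((2 * n).factorial : ℝ)⁻¹ * ((2 * (k - n)).factorial : ℝ)⁻¹ := by
  rw [angularSum, mul_sum]
  refine sum_le_sum fun n hn => ?_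
  have hnk : n ≤ k := Nat.lt_succ_iff.1 (mem_range.1 hn)
  have hsum : (2 * (n : ℝ) + 1) / p + (2 * ((k - n : ℕ) : ℝ) + 1) / p = 2 / p * (k + 1) := by
    rw [Nat.cast_sub hnk]
    ring
  have hΓ : Gamma ((2 * (n : ℝ) + 1) / p) * Gamma ((2 * ((k - n : ℕ) : ℝ) + 1) / p)
      ≤ beta (1 / p) (1 / p) * Gamma (2 / p * (k + 1)) := by
    rw [← hsum]
    exact Gamma_mul_Gamma_le (by positivity) (by positivity)
      (div_le_div_of_nonneg_right (by linarith [n.cast_nonneg (α := ℝ)]) hp.le)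
      (div_le_div_of_nonneg_right (by linarith [(k - n).cast_nonneg (α := ℝ)]) hp.le)
  have hangle : |cos φ| ^ (4 * (n : ℝ) / p) * |sin φ| ^ (4 * ((k - n : ℕ) : ℝ) / p) ≤ 1 :=
    mul_le_one₀ (rpow_le_one (abs_nonneg _) (abs_cos_le_one φ) (by positivity))
      (rpow_nonneg (abs_nonneg _) _) (rpow_le_one (abs_nonneg _) (abs_sin_le_one φ) (by positivity))
  have hΓ₁ := Gamma_pos_of_pos (by positivity : 0 < (2 * (n : ℝ) + 1) / p)
  have hΓ₂ := Gamma_pos_of_pos (by positivity : 0 < (2 * ((k - n : ℕ) : ℝ) + 1) / p)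
  calc _ ≤ Gamma ((2 * (n : ℝ) + 1) / p) * Gamma ((2 * ((k - n : ℕ) : ℝ) + 1) / p) /
        (((2 * n).factorial : ℝ) * ((2 * (k - n)).factorial : ℝ)) :=
        mul_le_of_le_one_right (by positivity) hangle
    _ ≤ beta (1 / p) (1 / p) * Gamma (2 / p * (k + 1)) /
        (((2 * n).factorial : ℝ) * ((2 * (k - n)).factorial : ℝ)) := by gcongr
    _ = _ := by ring

lemma summable_sum_range_even_pow_div_factorial (r : ℝ) :
    Summable fun k => ∑ n ∈ range (k + 1),
      r ^ (2 * n) / (2 * n).factorial * (r ^ (2 * (k - n)) / (2 * (k - n)).factorial) := by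
  have h : Summable fun n => ‖r ^ (2 * n) / ((2 * n).factorial : ℝ)‖ := by
    simpa only [norm_eq_abs] using (hasSum_cosh r).summable.abs
  exact (summable_norm_sum_mul_range_of_summable_norm h h).of_norm

lemma abs_calJTerm_eq (hp : 0 < p) (hω : 0 ≤ ω) (hr : 0 ≤ r) (φ : ℝ) (k : ℕ) :
    |calJTerm p ω φ k r| = (2 / p) ^ 2 / Gamma (1 / p) ^ 2 * (r / p) ^ ω *
      (r ^ (2 * k) * angularSum p φ k / Gamma (2 / p * (k + 1) + ω)) := by
  have hΓ := Gamma_pos_of_pos (by positivity : 0 < 2 / p * (k + 1) + ω)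
  have hsplit : p ^ (2 * k) * (r / p) ^ (2 * (k : ℝ) + ω) = r ^ (2 * k) * (r / p) ^ ω := by
    rw [rpow_add_of_nonneg (div_nonneg hr hp.le) (by positivity) hω,
      show 2 * (k : ℝ) = ((2 * k : ℕ) : ℝ) by push_cast; ring, rpow_natCast, ← mul_assoc,
      ← mul_pow, mul_div_cancel₀ r hp.ne']
  rw [calJTerm, abs_mul,
    abs_of_nonneg (by positivity : (0 : ℝ) ≤ (2 / p) ^ 2 / Gamma (1 / p) ^ 2)]
  simp only [abs_mul, abs_div, abs_pow, abs_neg, abs_one, one_pow, mul_one, abs_of_pos hp,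
    abs_of_pos hΓ, abs_of_nonneg (rpow_nonneg (div_nonneg hr hp.le) _),
    abs_of_nonneg (angularSum_nonneg hp φ k)]
  linear_combination ((2 / p) ^ 2 / Gamma (1 / p) ^ 2 * angularSum p φ k /
    Gamma (2 / p * (k + 1) + ω)) * hsplit

lemma abs_calJTerm_le (hp : 0 < p) (hω : 0 < ω) (hr : 0 ≤ r) (φ : ℝ) (k : ℕ) :
    |calJTerm p ω φ k r| ≤ (2 / p) ^ 2 / Gamma (1 / p) ^ 2 * (r / p) ^ ω *
      (beta (1 / p) (1 / p) * (Gamma (2 / p) / Gamma (2 / p + ω))) *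
      ∑ n ∈ range (k + 1),
        r ^ (2 * n) / (2 * n).factorial * (r ^ (2 * (k - n)) / (2 * (k - n)).factorial) := by
  have hratio : Gamma (2 / p * (k + 1)) / Gamma (2 / p * (k + 1) + ω)
      ≤ Gamma (2 / p) / Gamma (2 / p + ω) :=
    Gamma_div_Gamma_add_le (by positivity)
      (le_mul_of_one_le_right (by positivity) (by linarith [k.cast_nonneg (α := ℝ)])) hω
  have hcauchy :
      r ^ (2 * k) * ∑ n ∈ range (k + 1), ((2 * n).factorial : ℝ)⁻¹ * ((2 * (k - n)).factorial : ℝ)⁻¹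
        = ∑ n ∈ range (k + 1),
            r ^ (2 * n) / (2 * n).factorial * (r ^ (2 * (k - n)) / (2 * (k - n)).factorial) := by
    rw [mul_sum]
    refine sum_congr rfl fun n hn => ?_
    rw [← Nat.sub_add_cancel (Nat.lt_succ_iff.1 (mem_range.1 hn)), Nat.add_sub_cancel]
    ring
  have hΓ := Gamma_pos_of_pos (by positivity : 0 < 2 / p * (k + 1) + ω)
  have hB := beta_pos (one_div_pos.2 hp) (one_div_pos.2 hp)
  rw [abs_calJTerm_eq hp hω.le hr, ← hcauchy, mul_assoc _ (beta _ _ * _)]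
  refine mul_le_mul_of_nonneg_left ?_ (by positivity)
  calc r ^ (2 * k) * angularSum p φ k / Gamma (2 / p * (k + 1) + ω)
      ≤ r ^ (2 * k) * (beta (1 / p) (1 / p) * Gamma (2 / p * (k + 1)) *
          ∑ n ∈ range (k + 1), ((2 * n).factorial : ℝ)⁻¹ * ((2 * (k - n)).factorial : ℝ)⁻¹) /
          Gamma (2 / p * (k + 1) + ω) := by gcongr; exact angularSum_le hp φ k
    _ = beta (1 / p) (1 / p) *
          (Gamma (2 / p * (k + 1)) / Gamma (2 / p * (k + 1) + ω)) *
          (r ^ (2 * k) * ∑ n ∈ range (k + 1),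
            ((2 * n).factorial : ℝ)⁻¹ * ((2 * (k - n)).factorial : ℝ)⁻¹) := by ring
    _ ≤ _ := by gcongr

lemma summable_abs_calJTerm (hp : 0 < p) (hω : 0 < ω) (hr : 0 ≤ r) (φ : ℝ) :
    Summable fun k => |calJTerm p ω φ k r| :=
  Summable.of_nonneg_of_le (fun _ => abs_nonneg _) (abs_calJTerm_le hp hω hr φ)
    ((summable_sum_range_even_pow_div_factorial r).mul_left _)

lemma summable_abs_calJTerm_mul_beta {γ : ℝ} (hp : 0 < p) (hω : 0 ≤ ω) (hγ : 0 < γ) (hr : 0 < r)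
    (φ : ℝ) : Summable fun k : ℕ => |calJTerm p ω φ k r| * beta (2 / p * (k + 1) + ω) γ := by
  refine ((summable_abs_calJTerm hp (add_pos_of_nonneg_of_pos hω hγ) hr.le φ).mul_left
    (Gamma γ * (p / r) ^ γ)).congr fun k => ?_
  have hs : 0 < 2 / p * (k + 1) + ω := by positivity
  have hratio := div_pos (Gamma_pos_of_pos hs) (Gamma_pos_of_pos (add_pos hs hγ))
  calc Gamma γ * (p / r) ^ γ * |calJTerm p (ω + γ) φ k r|
      = Gamma γ * |(p / r) ^ γ * calJTerm p (ω + γ) φ k r| := by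
        rw [abs_mul, abs_of_pos (rpow_pos_of_pos (div_pos hp hr) γ), mul_assoc]
    _ = |calJTerm p ω φ k r| * beta (2 / p * (k + 1) + ω) γ := by
        rw [← Gamma_div_mul_calJTerm hp hω hr, abs_mul, abs_of_pos hratio, beta]
        ring

end calJSummable

theorem EK_integral_calJ_general (p ω γ φ r : ℝ) (hp : 0 < p)
    (hω : 0 ≤ ω) (hγ : γ ∈ Set.Ioo (0 : ℝ) 1) (hr : 0 < r) :
    EKintegral p ((1 - 1 / p) * ω + 2 / p - 1) γ (calJ p ω φ) r
      = (p / r) ^ γ * calJ p (ω + γ) φ r := by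
  have hds : ∀ k : ℕ, (1 - 1 / p) * ω + 2 / p - 1 + 1 + (2 * k + ω) / p = 2 / p * (k + 1) + ω :=
    fun k => by field_simp; ring
  rw [show calJ p ω φ = fun x => ∑' k, calJTerm p ω φ k x from funext (calJ_eq_tsum p ω φ),
    EKintegral_tsum_of_homogeneous hp hγ.1
      (fun k τ hτ => calJTerm_homogeneous hp hr.le φ k hτ.1.le) hds (fun k => by positivity)
      (summable_abs_calJTerm_mul_beta hp hω hγ.1 hr φ),
    tsum_congr (Gamma_div_mul_calJTerm hp hω hr γ φ), tsum_mul_left, calJ_eq_tsum]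

theorem EK_integral_calJ (p ω γ φ r : ℝ) (hp : 0 < p) (hq : ∃ q : ℕ, (q : ℝ) = 2 / p)
    (hω : 0 ≤ ω) (hγ : γ ∈ Set.Ioo (0 : ℝ) 1) (hφ : φ ∈ Set.Ico 0 (2 * Real.pi)) (hr : 0 < r) :
    EKintegral p ((1 - 1 / p) * ω + 2 / p - 1) γ (calJ p ω φ) r
      = (p / r) ^ γ * calJ p (ω + γ) φ r :=
  EK_integral_calJ_general p ω γ φ r hp hω hγ hr
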